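/- Let (Γ, L) be a strongly connected periodic graph with periodic realization Φ and vertex x₀. Then there exist constants C′₁, C′₂ ≥ 0 such that for every vertex y of Γ, d_{P_Γ,Φ}(x₀, y) − C′₁ ≤ d_Γ(x₀, y) ≤ d_{P_Γ,Φ}(x₀, y) + C′₂. In other words, the graph distance from x₀ differs from the gauge distance of the growth polytope by a bounded amount. -/

import Mathlib

open Pointwise

/-- An `n`-dimensional periodic graph, presented concretely: since the action of `L ≅ ℤⁿ` on the
vertex/edge sets is free with finite quotient, vertices are `(Fin n → ℤ) × V0` and edges are
translates of finitely many edge classes `E0`; the class `e` joins `(0, srcV e)` to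
`(vec e, tgtV e)` and has weight `wt e > 0`. -/
structure PeriodicGraph (n : ℕ) where
  V0 : Type
  E0 : Type
  fintypeV0 : Fintype V0
  fintypeE0 : Fintype E0
  srcV : E0 → V0
  tgtV : E0 → V0
  vec : E0 → Fin n → ℤ
  wt : E0 → ℕ
  wt_pos : ∀ e, 0 < wt e

namespace PeriodicGraph

variable {n : ℕ}

/-- `Reaches G x y w`: there is a directed walk in `Γ` from `x` to `y` of total weight `w`. -/
inductive Reaches (G : PeriodicGraph n) :
    ((Fin n → ℤ) × G.V0) → ((Fin n → ℤ) × G.V0) → ℕ → Prop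
  | refl (x : (Fin n → ℤ) × G.V0) : Reaches G x x 0
  | tail {x : (Fin n → ℤ) × G.V0} {w : ℕ} (u : Fin n → ℤ) (e : G.E0) :
      Reaches G x (u, G.srcV e) w → Reaches G x (u + G.vec e, G.tgtV e) (w + G.wt e)

/-- `Γ` is strongly connected: any vertex reaches any other by a directed walk. -/
def StronglyConnected (G : PeriodicGraph n) : Prop :=
  ∀ x y : (Fin n → ℤ) × G.V0, ∃ w : ℕ, G.Reaches x y w

/-- The weighted graph distance `d_Γ(x,y)` (the minimal weight of a walk from `x` to `y`). -/
noncomputable def dist (G : PeriodicGraph n) (x y : (Fin n → ℤ) × G.V0) : ℕ :=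
  sInf {w : ℕ | G.Reaches x y w}

/-- A cycle in the quotient graph `Γ/L`: a nonempty chained list of edge classes, closed, whose
visited vertices are pairwise distinct. -/
def IsQCycle (G : PeriodicGraph n) (l : List G.E0) : Prop :=
  ∃ h : l ≠ [], l.Chain' (fun e f => G.tgtV e = G.srcV f) ∧
    G.tgtV (l.getLast h) = G.srcV (l.head h) ∧ (l.map G.tgtV).Nodup

/-- The net translation vector `μ(⟨q⟩)` of a quotient walk. -/
def qvec (G : PeriodicGraph n) (l : List G.E0) : Fin n → ℤ := (l.map G.vec).sum

/-- The total weight `w(q)` of a quotient walk. -/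
def qwt (G : PeriodicGraph n) (l : List G.E0) : ℕ := (l.map G.wt).sum

/-- The normalization `ν(q) = μ(⟨q⟩)/w(q)` of a quotient cycle. -/
noncomputable def nu (G : PeriodicGraph n) (l : List G.E0) : Fin n → ℝ :=
  (G.qwt l : ℝ)⁻¹ • fun i => (G.qvec l i : ℝ)

/-- The growth polytope `P_Γ`: the convex hull of `0` together with the normalized translation
vectors of all cycles of `Γ/L`. -/
noncomputable def growthPolytope (G : PeriodicGraph n) : Set (Fin n → ℝ) :=
  convexHull ℝ (insert 0 {x : Fin n → ℝ | ∃ l : List G.E0, G.IsQCycle l ∧ x = G.nu l})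

/-- The gauge `d_P(y) = inf {t ≥ 0 | y ∈ t·P}` of a set `P`. -/
noncomputable def pgauge {n : ℕ} (P : Set (Fin n → ℝ)) (y : Fin n → ℝ) : ℝ :=
  sInf {t : ℝ | 0 ≤ t ∧ y ∈ t • P}

/-- A periodic realization `Φ : V_Γ → L ⊗ ℝ`, i.e. `Φ(u + x) = u + Φ(x)` for `u ∈ L`. -/
def IsRealization (G : PeriodicGraph n) (Φ : (Fin n → ℤ) × G.V0 → Fin n → ℝ) : Prop :=
  ∀ (u : Fin n → ℤ) (x : (Fin n → ℤ) × G.V0),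
    Φ (u + x.1, x.2) = (fun i => (u i : ℝ)) + Φ x

/-- `x₀` is `P`-initial: every nonzero vertex (extreme point) `u` of `P_Γ` is the normalized
vector of some cycle of `Γ/L` whose support contains the image of `x₀`. -/
def PInitial (G : PeriodicGraph n) (x₀ : (Fin n → ℤ) × G.V0) : Prop :=
  ∀ u ∈ Set.extremePoints ℝ G.growthPolytope, u ≠ 0 →
    ∃ l : List G.E0, G.IsQCycle l ∧ G.nu l = u ∧ x₀.2 ∈ l.map G.tgtV

end PeriodicGraph

/-- A function `ℕ → ℕ` is of quasi-polynomial type if it eventually agrees with a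
quasi-polynomial. -/
def IsQuasiPolynomialType (f : ℕ → ℕ) : Prop :=
  ∃ Np : ℕ, 0 < Np ∧ ∃ Q : ℕ → Polynomial ℚ, ∃ M : ℕ,
    ∀ i : ℕ, M ≤ i → (f i : ℚ) = (Q (i % Np)).eval (i : ℚ)

/-!
Every closed walk of the quotient graph splits into simple cycles, so the translation vector of a
closed walk of weight `w` lies in `w • P_Γ`. Closing a shortest walk `x₀ → y` by a return path of
bounded weight gives the lower bound.

Conversely, `P_Γ` is the convex hull of `0` and finitely many cycle vectors `ν(q)`, so a point of
`s • P_Γ` is a combination `∑ λ_q ν(q)` with `λ_q ≥ 0` and `∑ λ_q ≤ s`. Running each cycle `q`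
`⌊λ_q / w(q)⌋` times, attached to `x₀` by detours of bounded weight, costs at most `s` plus a
constant and leaves a lattice vector of bounded norm to be covered; there are finitely many such
vectors, so this costs at most a constant as well.
-/

section ConvexSmul

variable {E : Type*} [AddCommGroup E] [Module ℝ E] {P : Set E}

theorem Convex.smul_subset_smul_of_zero_mem (hP : Convex ℝ P) (h0 : (0 : E) ∈ P) {s t : ℝ}
    (hs : 0 ≤ s) (hst : s ≤ t) : s • P ⊆ t • P := by
  intro x hx
  rw [← add_sub_cancel s t, hP.add_smul hs (sub_nonneg.2 hst)]
  simpa using Set.add_mem_add hx (Set.zero_mem_smul_set (a := t - s) h0)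

theorem Convex.sum_mem_sum_smul {ι : Type*} (hP : Convex ℝ P) (h0 : (0 : E) ∈ P) {s : Finset ι}
    {t : ι → ℝ} {x : ι → E} (ht : ∀ i ∈ s, 0 ≤ t i) (hx : ∀ i ∈ s, x i ∈ t i • P) :
    ∑ i ∈ s, x i ∈ (∑ i ∈ s, t i) • P := by
  classical
  induction s using Finset.induction_on with
  | empty => simpa using Set.zero_mem_smul_set h0
  | insert a s ha ih =>
    rw [Finset.forall_mem_insert] at ht hx
    rw [Finset.sum_insert ha, Finset.sum_insert ha, hP.add_smul ht.1 (Finset.sum_nonneg ht.2)]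
    exact Set.add_mem_add hx.1 (ih ht.2 hx.2)

theorem exists_sum_smul_eq_of_mem_smul_convexHull {ι : Type*} {f : ι → E} {T : Finset ι}
    (hf : Set.InjOn f T) {s : ℝ} {x : E} (hs : 0 ≤ s)
    (hx : x ∈ s • convexHull ℝ (insert 0 (f '' T))) :
    ∃ c : ι → ℝ, (∀ i ∈ T, 0 ≤ c i) ∧ ∑ i ∈ T, c i ≤ s ∧ x = ∑ i ∈ T, c i • f i := by
  classical
  obtain ⟨y, hy, rfl⟩ := hx
  rw [← Finset.coe_image, ← Finset.coe_insert, Finset.mem_convexHull'] at hy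
  obtain ⟨w, hw0, hw1, rfl⟩ := hy
  refine ⟨fun i => s * w (f i), fun i hi => mul_nonneg hs
    (hw0 _ (Finset.mem_insert_of_mem (Finset.mem_image_of_mem f hi))), ?_, ?_⟩
  · have hle : ∑ y ∈ T.image f, w y ≤ 1 :=
      hw1 ▸ Finset.sum_le_sum_of_subset_of_nonneg (Finset.subset_insert _ _)
        fun y hy _ => hw0 y hy
    rw [← Finset.mul_sum, ← Finset.sum_image hf]
    exact mul_le_of_le_one_right hs hle
  · dsimp only
    rw [Finset.sum_insert_zero (f := fun y => w y • y) (smul_zero _), Finset.sum_image hf,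
      Finset.smul_sum]
    simp only [smul_smul]

end ConvexSmul

theorem floor_div_natCast_mul_le {x : ℝ} (hx : 0 ≤ x) (w : ℕ) : (⌊x / w⌋₊ : ℝ) * w ≤ x := by
  rcases Nat.eq_zero_or_pos w with rfl | hw
  · simpa using hx
  · exact (le_div_iff₀ (by exact_mod_cast hw)).1 (Nat.floor_le (by positivity))

theorem norm_sum_smul_sub_sum_floor_smul_le {E ι : Type*} [SeminormedAddCommGroup E]
    [NormedSpace ℝ E] (s : Finset ι) (c : ι → ℝ) (v : ι → E) (hc : ∀ i ∈ s, 0 ≤ c i) :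
    ‖∑ i ∈ s, c i • v i - ∑ i ∈ s, (⌊c i⌋₊ : ℝ) • v i‖ ≤ ∑ i ∈ s, ‖v i‖ := by
  rw [← Finset.sum_sub_distrib]
  refine (norm_sum_le _ _).trans (Finset.sum_le_sum fun i hi => ?_)
  rw [← sub_smul, norm_smul, Real.norm_of_nonneg (sub_nonneg.2 (Nat.floor_le (hc i hi)))]
  exact mul_le_of_le_one_left (norm_nonneg _) (by linarith [Nat.lt_floor_add_one (c i)])

theorem List.exists_eq_append_cons_append_cons_of_not_nodup_map {α β : Type*} {g : α → β}
    {l : List α} (h : ¬(l.map g).Nodup) :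
    ∃ l₁ a l₂ b l₃, l = l₁ ++ a :: (l₂ ++ b :: l₃) ∧ g a = g b := by
  induction l with
  | nil => simp at h
  | cons a t ih =>
    rw [List.map_cons, List.nodup_cons, not_and_or, not_not] at h
    rcases h with h | h
    · obtain ⟨b, hb, hab⟩ := List.mem_map.1 h
      obtain ⟨l₂, l₃, rfl⟩ := List.append_of_mem hb
      exact ⟨[], a, l₂, b, l₃, rfl, hab.symm⟩
    · obtain ⟨l₁, a', l₂, b, l₃, rfl, hab⟩ := ih h
      exact ⟨a :: l₁, a', l₂, b, l₃, rfl, hab⟩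

namespace PeriodicGraph

variable {n : ℕ}

def latticeCast : (Fin n → ℤ) →+ (Fin n → ℝ) := (Int.castAddHom ℝ).compLeft (Fin n)

@[simp] theorem latticeCast_apply (u : Fin n → ℤ) (i : Fin n) : latticeCast u i = u i := rfl

theorem norm_latticeCast (u : Fin n → ℤ) : ‖latticeCast u‖ = ‖u‖ := by
  refine le_antisymm ((pi_norm_le_iff_of_nonneg (norm_nonneg u)).2 fun i => ?_)
    ((pi_norm_le_iff_of_nonneg (norm_nonneg _)).2 fun i => ?_)
  · rw [latticeCast_apply, Int.norm_cast_real]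
    exact norm_le_pi_norm u i
  · rw [← Int.norm_cast_real, ← latticeCast_apply]
    exact norm_le_pi_norm _ i

variable {G : PeriodicGraph n}

theorem IsRealization.sub_eq {Φ : (Fin n → ℤ) × G.V0 → Fin n → ℝ}
    (hΦ : G.IsRealization Φ) (x y : (Fin n → ℤ) × G.V0) :
    Φ y - Φ x = latticeCast (y.1 - x.1) + (Φ (0, y.2) - Φ (0, x.2)) := by
  have hx := hΦ x.1 (0, x.2)
  have hy := hΦ y.1 (0, y.2)
  simp only [add_zero, Prod.mk.eta] at hx hy
  ext i
  simp [hx, hy]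
  ring

theorem pgauge_nonneg (P : Set (Fin n → ℝ)) (x : Fin n → ℝ) : 0 ≤ pgauge P x :=
  Real.sInf_nonneg fun _ ht => ht.1

theorem pgauge_le_of_mem {P : Set (Fin n → ℝ)} {x : Fin n → ℝ} {t : ℝ} (ht : 0 ≤ t)
    (hx : x ∈ t • P) : pgauge P x ≤ t :=
  csInf_le ⟨0, fun _ hs => hs.1⟩ ⟨ht, hx⟩

theorem mem_smul_of_pgauge_lt {P : Set (Fin n → ℝ)} (hP : Convex ℝ P) (h0 : 0 ∈ P)
    {x : Fin n → ℝ} (hx : ∃ t : ℝ, 0 ≤ t ∧ x ∈ t • P) {s : ℝ} (hs : pgauge P x < s) :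
    x ∈ s • P := by
  unfold pgauge at hs
  obtain ⟨t, ⟨ht, hxt⟩, hts⟩ :=
    (csInf_lt_iff (s := {t : ℝ | 0 ≤ t ∧ x ∈ t • P}) ⟨0, fun _ h => h.1⟩ hx).1 hs
  exact hP.smul_subset_smul_of_zero_mem h0 ht hts.le hxt

instance : Fintype G.V0 := G.fintypeV0

instance : Fintype G.E0 := G.fintypeE0

@[simp] theorem qvec_nil : G.qvec [] = 0 := rfl

@[simp] theorem qwt_nil : G.qwt [] = 0 := rfl

@[simp] theorem qvec_cons (e : G.E0) (l : List G.E0) : G.qvec (e :: l) = G.vec e + G.qvec l := by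
  simp [qvec]

@[simp] theorem qwt_cons (e : G.E0) (l : List G.E0) : G.qwt (e :: l) = G.wt e + G.qwt l := by
  simp [qwt]

@[simp] theorem qvec_append (l₁ l₂ : List G.E0) : G.qvec (l₁ ++ l₂) = G.qvec l₁ + G.qvec l₂ := by
  simp [qvec]

@[simp] theorem qwt_append (l₁ l₂ : List G.E0) : G.qwt (l₁ ++ l₂) = G.qwt l₁ + G.qwt l₂ := by
  simp [qwt]

section Reaches

variable {x y z : (Fin n → ℤ) × G.V0} {w w' : ℕ}

theorem Reaches.trans (h₁ : G.Reaches x y w) (h₂ : G.Reaches y z w') : G.Reaches x z (w + w') := by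
  induction h₂ with
  | refl => exact h₁
  | tail u e _ ih => rw [← Nat.add_assoc]; exact ih.tail u e

theorem Reaches.translate (u : Fin n → ℤ) (h : G.Reaches x y w) :
    G.Reaches (u + x.1, x.2) (u + y.1, y.2) w := by
  induction h with
  | refl => exact Reaches.refl _
  | tail u' e _ ih => simpa [add_assoc] using ih.tail (u + u') e

theorem Reaches.edge (u : Fin n → ℤ) (e : G.E0) :
    G.Reaches (u, G.srcV e) (u + G.vec e, G.tgtV e) (G.wt e) := by
  simpa using (Reaches.refl (G := G) (u, G.srcV e)).tail u e

theorem reaches_dist (hsc : G.StronglyConnected) (x y : (Fin n → ℤ) × G.V0) :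
    G.Reaches x y (G.dist x y) :=
  Nat.sInf_mem (hsc x y)

theorem dist_le_of_reaches (h : G.Reaches x y w) : G.dist x y ≤ w :=
  Nat.sInf_le h

theorem dist_triangle (hsc : G.StronglyConnected) (x y z : (Fin n → ℤ) × G.V0) :
    G.dist x z ≤ G.dist x y + G.dist y z :=
  dist_le_of_reaches ((reaches_dist hsc x y).trans (reaches_dist hsc y z))

theorem dist_translate_le (hsc : G.StronglyConnected) (u : Fin n → ℤ)
    (x y : (Fin n → ℤ) × G.V0) : G.dist (u + x.1, x.2) (u + y.1, y.2) ≤ G.dist x y :=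
  dist_le_of_reaches ((reaches_dist hsc x y).translate u)

end Reaches

inductive IsQWalk (G : PeriodicGraph n) : G.V0 → List G.E0 → G.V0 → Prop
  | nil (a : G.V0) : IsQWalk G a [] a
  | cons {b : G.V0} {l : List G.E0} (e : G.E0) :
      IsQWalk G (G.tgtV e) l b → IsQWalk G (G.srcV e) (e :: l) b

section IsQWalk

variable {a b c : G.V0} {l l₁ l₂ : List G.E0}

@[simp] theorem isQWalk_nil_iff : G.IsQWalk a [] b ↔ a = b :=
  ⟨fun h => by cases h; rfl, fun h => h ▸ IsQWalk.nil a⟩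

@[simp] theorem isQWalk_cons_iff {e : G.E0} :
    G.IsQWalk a (e :: l) b ↔ G.srcV e = a ∧ G.IsQWalk (G.tgtV e) l b :=
  ⟨fun h => by cases h; exact ⟨rfl, by assumption⟩, fun ⟨he, h⟩ => he ▸ h.cons e⟩

@[simp] theorem isQWalk_append_iff :
    G.IsQWalk a (l₁ ++ l₂) c ↔ ∃ b, G.IsQWalk a l₁ b ∧ G.IsQWalk b l₂ c := by
  induction l₁ generalizing a with
  | nil => simp
  | cons e l₁ ih => simp [ih, and_assoc]

theorem isQWalk_iff_isChain (hl : l ≠ []) :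
    G.IsQWalk a l b ↔ l.IsChain (fun e f => G.tgtV e = G.srcV f) ∧
      G.srcV (l.head hl) = a ∧ G.tgtV (l.getLast hl) = b := by
  induction l generalizing a with
  | nil => exact absurd rfl hl
  | cons e t ih =>
    cases t with
    | nil => simp [eq_comm]
    | cons f t =>
      rw [isQWalk_cons_iff, ih (List.cons_ne_nil f t), List.isChain_cons_cons,
        List.getLast_cons_cons]
      simp only [List.head_cons]
      tauto

theorem IsQWalk.reaches (h : G.IsQWalk a l b) (u : Fin n → ℤ) :
    G.Reaches (u, a) (u + G.qvec l, b) (G.qwt l) := by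
  induction h generalizing u with
  | nil a => simpa using Reaches.refl (u, a)
  | cons e _ ih => simpa [add_assoc] using (Reaches.edge u e).trans (ih (u + G.vec e))

theorem IsQWalk.reaches_nsmul (h : G.IsQWalk a l a) (m : ℕ) (u : Fin n → ℤ) :
    G.Reaches (u, a) (u + m • G.qvec l, a) (m * G.qwt l) := by
  induction m with
  | zero => simpa using Reaches.refl (u, a)
  | succ m ih =>
    have hstep := ih.trans (h.reaches (u + m • G.qvec l))
    rwa [add_assoc, ← succ_nsmul, ← add_one_mul] at hstep

theorem Reaches.exists_isQWalk {x y : (Fin n → ℤ) × G.V0} {w : ℕ} (h : G.Reaches x y w) :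
    ∃ l, G.IsQWalk x.2 l y.2 ∧ G.qvec l = y.1 - x.1 ∧ G.qwt l = w := by
  induction h with
  | refl => exact ⟨[], IsQWalk.nil _, by simp, rfl⟩
  | tail u e _ ih =>
    obtain ⟨l, hl, hv, hw⟩ := ih
    refine ⟨l ++ [e], isQWalk_append_iff.2 ⟨_, hl, by simp⟩, ?_, by simp [hw]⟩
    simp only [qvec_append, qvec_cons, qvec_nil, hv]
    abel

theorem IsQCycle.exists_isQWalk (h : G.IsQCycle l) : ∃ a, G.IsQWalk a l a := by
  obtain ⟨hne, hc, hcl, -⟩ := h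
  exact ⟨_, (isQWalk_iff_isChain hne).2 ⟨hc, rfl, hcl⟩⟩

theorem IsQWalk.isQCycle (h : G.IsQWalk a l a) (hne : l ≠ []) (hnd : (l.map G.tgtV).Nodup) :
    G.IsQCycle l := by
  obtain ⟨hc, ha, hb⟩ := (isQWalk_iff_isChain hne).1 h
  exact ⟨hne, hc, hb.trans ha.symm, hnd⟩

end IsQWalk

theorem zero_mem_growthPolytope : (0 : Fin n → ℝ) ∈ G.growthPolytope :=
  subset_convexHull ℝ _ (Set.mem_insert _ _)

theorem convex_growthPolytope : Convex ℝ G.growthPolytope :=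
  convex_convexHull ℝ _

theorem IsQCycle.nu_mem_growthPolytope {l : List G.E0} (h : G.IsQCycle l) :
    G.nu l ∈ G.growthPolytope :=
  subset_convexHull ℝ _ (Set.mem_insert_of_mem _ ⟨l, h, rfl⟩)

theorem smul_nu (c : ℝ) (l : List G.E0) :
    c • G.nu l = (c / G.qwt l) • latticeCast (G.qvec l) := by
  rw [nu, smul_smul, div_eq_mul_inv]
  rfl

theorem qwt_pos {l : List G.E0} (hl : l ≠ []) : 0 < G.qwt l := by
  obtain ⟨e, t, rfl⟩ := List.exists_cons_of_ne_nil hl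
  simpa using Nat.lt_add_right _ (G.wt_pos e)

/-- Cycle decomposition: a closed walk is cut at a repeated vertex until only simple cycles
remain. -/
theorem IsQWalk.latticeCast_qvec_mem_smul {a : G.V0} {l : List G.E0} (h : G.IsQWalk a l a) :
    latticeCast (G.qvec l) ∈ (G.qwt l : ℝ) • G.growthPolytope := by
  induction hlen : l.length using Nat.strong_induction_on generalizing a l with
  | _ N ih =>
  rcases eq_or_ne l [] with rfl | hne
  · simpa using Set.zero_mem_smul_set zero_mem_growthPolytope
  by_cases hnd : (l.map G.tgtV).Nodup
  · have hw : (G.qwt l : ℝ) ≠ 0 := by exact_mod_cast (qwt_pos hne).ne'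
    have hmem := Set.smul_mem_smul_set (a := (G.qwt l : ℝ))
      (h.isQCycle hne hnd).nu_mem_growthPolytope
    rwa [smul_nu, div_self hw, one_smul] at hmem
  obtain ⟨l₁, e, l₂, f, l₃, rfl, hef⟩ :=
    List.exists_eq_append_cons_append_cons_of_not_nodup_map hnd
  simp only [isQWalk_append_iff, isQWalk_cons_iff] at h
  obtain ⟨b, h₁, rfl, c, h₂, rfl, h₃⟩ := h
  have hinner : G.IsQWalk (G.tgtV e) (l₂ ++ [f]) (G.tgtV e) :=
    isQWalk_append_iff.2 ⟨_, h₂, by simp [hef]⟩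
  have houter : G.IsQWalk a (l₁ ++ e :: l₃) a :=
    isQWalk_append_iff.2 ⟨_, h₁, isQWalk_cons_iff.2 ⟨rfl, by rwa [hef]⟩⟩
  subst hlen
  have hv : G.qvec (l₁ ++ e :: (l₂ ++ f :: l₃)) = G.qvec (l₂ ++ [f]) + G.qvec (l₁ ++ e :: l₃) := by
    simp only [qvec_append, qvec_cons, qvec_nil]
    abel
  have hw : (G.qwt (l₁ ++ e :: (l₂ ++ f :: l₃)) : ℝ)
      = G.qwt (l₂ ++ [f]) + G.qwt (l₁ ++ e :: l₃) := by
    simp only [qwt_append, qwt_cons, qwt_nil]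
    push_cast
    ring
  rw [hv, map_add, hw, convex_growthPolytope.add_smul (Nat.cast_nonneg _) (Nat.cast_nonneg _)]
  have hlen_inner : (l₂ ++ [f]).length < (l₁ ++ e :: (l₂ ++ f :: l₃)).length := by
    simp only [List.length_append, List.length_cons, List.length_nil]
    omega
  have hlen_outer : (l₁ ++ e :: l₃).length < (l₁ ++ e :: (l₂ ++ f :: l₃)).length := by
    simp only [List.length_append, List.length_cons]
    omega
  exact Set.add_mem_add (ih _ hlen_inner hinner rfl) (ih _ hlen_outer houter rfl)

theorem Reaches.latticeCast_sub_mem_smul {x y : (Fin n → ℤ) × G.V0} {w : ℕ}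
    (h : G.Reaches x y w) (hxy : x.2 = y.2) :
    latticeCast (y.1 - x.1) ∈ (w : ℝ) • G.growthPolytope := by
  obtain ⟨l, hl, hv, rfl⟩ := h.exists_isQWalk
  rw [← hxy] at hl
  exact hv ▸ hl.latticeCast_qvec_mem_smul

theorem exists_mem_smul_growthPolytope (hsc : G.StronglyConnected) (a : G.V0)
    (x : Fin n → ℝ) : ∃ t : ℝ, 0 ≤ t ∧ x ∈ t • G.growthPolytope := by
  classical
  have hlattice (u : Fin n → ℤ) :
      latticeCast u ∈ (G.dist (0, a) (u, a) : ℝ) • G.growthPolytope := by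
    simpa using (reaches_dist hsc (0, a) (u, a)).latticeCast_sub_mem_smul rfl
  have hcoord (i : Fin n) : ∃ t : ℝ, 0 ≤ t ∧ Pi.single i (x i) ∈ t • G.growthPolytope := by
    rcases le_total 0 (x i) with hi | hi
    · refine ⟨x i * G.dist (0, a) (Pi.single i 1, a), mul_nonneg hi (Nat.cast_nonneg _), ?_⟩
      rw [← smul_smul]
      convert Set.smul_mem_smul_set (hlattice (Pi.single i 1)) using 1
      ext j
      by_cases hj : j = i <;> simp [hj]
    · refine ⟨-x i * G.dist (0, a) (Pi.single i (-1), a),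
        mul_nonneg (neg_nonneg.2 hi) (Nat.cast_nonneg _), ?_⟩
      rw [← smul_smul]
      convert Set.smul_mem_smul_set (hlattice (Pi.single i (-1))) using 1
      ext j
      by_cases hj : j = i <;> simp [hj]
  choose t ht hxt using hcoord
  refine ⟨∑ i, t i, Finset.sum_nonneg fun i _ => ht i, ?_⟩
  rw [← Finset.univ_sum_single x]
  exact convex_growthPolytope.sum_mem_sum_smul zero_mem_growthPolytope (fun i _ => ht i)
    fun i _ => hxt i

theorem finite_setOf_isQCycle : {l | G.IsQCycle l}.Finite := by
  refine (List.finite_length_le G.E0 (Fintype.card G.V0)).subset fun l hl => ?_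
  obtain ⟨-, -, -, hnd⟩ := hl
  simpa using hnd.length_le_card

theorem exists_finset_growthPolytope_eq : ∃ T : Finset (List G.E0), (∀ l ∈ T, G.IsQCycle l) ∧
    Set.InjOn G.nu T ∧ G.growthPolytope = convexHull ℝ (insert 0 (G.nu '' T)) := by
  classical
  obtain ⟨T, hTcyc, hinj, himage⟩ :=
    Finset.exists_subset_injOn_image_eq_of_surjOn _ (finite_setOf_isQCycle.image G.nu).toFinset
      (by rw [Set.Finite.coe_toFinset]; exact Set.surjOn_image _ _)
  refine ⟨T, fun l hl => hTcyc hl, hinj, ?_⟩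
  rw [← Finset.coe_image, himage, Set.Finite.coe_toFinset, growthPolytope]
  congr 2
  ext x
  simp [eq_comm]

theorem exists_cycle_combination_approx :
    ∃ (T : Finset (List G.E0)) (R : ℝ), (∀ l ∈ T, G.IsQCycle l) ∧
    ∀ (x : Fin n → ℝ) (s : ℝ), 0 ≤ s → x ∈ s • G.growthPolytope →
      ∃ m : List G.E0 → ℕ, ∑ l ∈ T, (m l : ℝ) * G.qwt l ≤ s ∧
        ‖x - latticeCast (∑ l ∈ T, m l • G.qvec l)‖ ≤ R := by
  obtain ⟨T, hT, hinj, hP⟩ := G.exists_finset_growthPolytope_eq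
  refine ⟨T, ∑ l ∈ T, ‖latticeCast (G.qvec l)‖, hT, fun x s hs hx => ?_⟩
  rw [hP] at hx
  obtain ⟨c, hc, hcs, rfl⟩ := exists_sum_smul_eq_of_mem_smul_convexHull hinj hs hx
  refine ⟨fun l => ⌊c l / G.qwt l⌋₊,
    (Finset.sum_le_sum fun l hl => floor_div_natCast_mul_le (hc l hl) _).trans hcs, ?_⟩
  simp_rw [smul_nu, map_sum, map_nsmul, ← Nat.cast_smul_eq_nsmul ℝ]
  exact norm_sum_smul_sub_sum_floor_smul_le T _ _ fun l hl =>
    div_nonneg (hc l hl) (Nat.cast_nonneg _)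

theorem dist_add_nsmul_le (hsc : G.StronglyConnected) {b : G.V0} {l : List G.E0}
    (hl : G.IsQWalk b l b) (a : G.V0) (m : ℕ) (u : Fin n → ℤ) :
    G.dist (u, a) (u + m • G.qvec l, a)
      ≤ G.dist (0, a) (0, b) + G.dist (0, b) (0, a) + m * G.qwt l := by
  have h₁ : G.dist (u, a) (u, b) ≤ G.dist (0, a) (0, b) := by
    simpa using dist_translate_le hsc u (0, a) (0, b)
  have h₂ := dist_le_of_reaches (hl.reaches_nsmul m u)
  have h₃ : G.dist (u + m • G.qvec l, b) (u + m • G.qvec l, a) ≤ G.dist (0, b) (0, a) := by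
    simpa using dist_translate_le hsc (u + m • G.qvec l) (0, b) (0, a)
  have hab := dist_triangle hsc (u, a) (u, b) (u + m • G.qvec l, a)
  have hba := dist_triangle hsc (u, b) (u + m • G.qvec l, b) (u + m • G.qvec l, a)
  omega

theorem dist_add_sum_le (hsc : G.StronglyConnected) (a : G.V0) {ι : Type*} (s : Finset ι)
    (δ : ι → Fin n → ℤ) (ω : ι → ℕ) (h : ∀ i ∈ s, ∀ u, G.dist (u, a) (u + δ i, a) ≤ ω i)
    (u : Fin n → ℤ) : G.dist (u, a) (u + ∑ i ∈ s, δ i, a) ≤ ∑ i ∈ s, ω i := by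
  classical
  induction s using Finset.induction_on generalizing u with
  | empty => simpa using dist_le_of_reaches (Reaches.refl (G := G) (u, a))
  | insert i s hi ih =>
    rw [Finset.forall_mem_insert] at h
    rw [Finset.sum_insert hi, Finset.sum_insert hi, ← add_assoc]
    have hrest := ih h.2 (u + δ i)
    have hfirst := h.1 u
    have htri := dist_triangle hsc (u, a) (u + δ i, a) (u + δ i + ∑ j ∈ s, δ j, a)
    omega

theorem exists_dist_le_of_norm_le (a : G.V0) (R : ℝ) : ∃ C : ℕ, ∀ (r : Fin n → ℤ) (b : G.V0),
    ‖latticeCast r‖ ≤ R → G.dist (0, a) (r, b) ≤ C := by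
  have hfin : {r : Fin n → ℤ | ‖latticeCast r‖ ≤ R}.Finite :=
    (isCompact_closedBall (0 : Fin n → ℤ) R).finite_of_discrete.subset fun r hr => by
      simpa [norm_latticeCast] using hr
  obtain ⟨C, hC⟩ := ((hfin.prod Set.finite_univ).image fun p => G.dist (0, a) p).bddAbove
  exact ⟨C, fun r b hr => hC ⟨(r, b), ⟨hr, trivial⟩, rfl⟩⟩

theorem exists_dist_le_of_mem_smul (hsc : G.StronglyConnected) (a : G.V0) (R : ℝ) :
    ∃ C : ℕ, ∀ (u : Fin n → ℤ) (b : G.V0) (x : Fin n → ℝ) (s : ℝ), 0 ≤ s →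
      x ∈ s • G.growthPolytope → ‖x - latticeCast u‖ ≤ R → (G.dist (0, a) (u, b) : ℝ) ≤ s + C := by
  obtain ⟨T, R₀, hT, happrox⟩ := G.exists_cycle_combination_approx
  have : Nonempty G.V0 := ⟨a⟩
  choose! base hbase using fun l hl => (hT l hl).exists_isQWalk
  obtain ⟨C₀, hC₀⟩ := G.exists_dist_le_of_norm_le a (R₀ + R)
  set K := ∑ l ∈ T, (G.dist (0, a) (0, base l) + G.dist (0, base l) (0, a))
  refine ⟨K + C₀, fun u b x s hs hx hxu => ?_⟩
  obtain ⟨m, hm, hxm⟩ := happrox x s hs hx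
  set δ := ∑ l ∈ T, m l • G.qvec l
  have hloops : G.dist (0, a) (δ, a) ≤ K + ∑ l ∈ T, m l * G.qwt l := by
    rw [← Finset.sum_add_distrib]
    simpa only [zero_add] using dist_add_sum_le hsc a T (fun l => m l • G.qvec l) _
      (fun l hl u => dist_add_nsmul_le hsc (hbase l hl) a (m l) u) 0
  have hrest : G.dist (δ, a) (u, b) ≤ C₀ := by
    refine le_trans (by simpa using dist_translate_le hsc δ (0, a) (u - δ, b)) (hC₀ _ _ ?_)
    calc ‖latticeCast (u - δ)‖ = ‖(x - latticeCast δ) - (x - latticeCast u)‖ := by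
          rw [map_sub, sub_sub_sub_cancel_left]
      _ ≤ R₀ + R := (norm_sub_le _ _).trans (add_le_add hxm hxu)
  have htotal : G.dist (0, a) (u, b) ≤ K + ∑ l ∈ T, m l * G.qwt l + C₀ :=
    (dist_triangle hsc _ (δ, a) _).trans (add_le_add hloops hrest)
  calc (G.dist (0, a) (u, b) : ℝ) ≤ K + ∑ l ∈ T, (m l : ℝ) * G.qwt l + C₀ := by
        exact_mod_cast htotal
    _ ≤ s + ↑(K + C₀) := by push_cast; linarith

variable {Φ : (Fin n → ℤ) × G.V0 → Fin n → ℝ}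

theorem exists_pgauge_le_dist_add (hsc : G.StronglyConnected) (hΦ : G.IsRealization Φ)
    (x₀ : (Fin n → ℤ) × G.V0) : ∃ C : ℝ, 0 ≤ C ∧ ∀ y : (Fin n → ℤ) × G.V0,
      pgauge G.growthPolytope (Φ y - Φ x₀) ≤ G.dist x₀ y + C := by
  choose t ht htP using fun v : G.V0 =>
    exists_mem_smul_growthPolytope hsc x₀.2 (Φ (0, v) - Φ (0, x₀.2))
  set D : G.V0 → ℝ := fun v => G.dist (0, v) (0, x₀.2) + t v
  have hD : ∀ v, 0 ≤ D v := fun v => add_nonneg (Nat.cast_nonneg _) (ht v)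
  refine ⟨∑ v, D v, Finset.sum_nonneg fun v _ => hD v, fun y => ?_⟩
  have hloop : G.Reaches x₀ (y.1, x₀.2) (G.dist x₀ y + G.dist (0, y.2) (0, x₀.2)) :=
    (reaches_dist hsc x₀ y).trans
      (by simpa using (reaches_dist hsc (0, y.2) (0, x₀.2)).translate y.1)
  have hmem : Φ y - Φ x₀ ∈
      ((G.dist x₀ y + G.dist (0, y.2) (0, x₀.2) : ℕ) + t y.2 : ℝ) • G.growthPolytope := by
    rw [hΦ.sub_eq, convex_growthPolytope.add_smul (Nat.cast_nonneg _) (ht _)]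
    exact Set.add_mem_add (hloop.latticeCast_sub_mem_smul rfl) (htP y.2)
  calc pgauge G.growthPolytope (Φ y - Φ x₀)
      ≤ (G.dist x₀ y + G.dist (0, y.2) (0, x₀.2) : ℕ) + t y.2 :=
        pgauge_le_of_mem (add_nonneg (Nat.cast_nonneg _) (ht _)) hmem
    _ ≤ G.dist x₀ y + ∑ v, D v := by
        push_cast
        linarith [Finset.single_le_sum (fun v _ => hD v) (Finset.mem_univ y.2)]

theorem exists_dist_le_pgauge_add (hsc : G.StronglyConnected) (hΦ : G.IsRealization Φ)
    (x₀ : (Fin n → ℤ) × G.V0) : ∃ C : ℝ, 0 ≤ C ∧ ∀ y : (Fin n → ℤ) × G.V0,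
      (G.dist x₀ y : ℝ) ≤ pgauge G.growthPolytope (Φ y - Φ x₀) + C := by
  set c : G.V0 → Fin n → ℝ := fun v => Φ (0, v) - Φ (0, x₀.2)
  obtain ⟨C, hC⟩ := exists_dist_le_of_mem_smul hsc x₀.2 (∑ v, ‖c v‖)
  refine ⟨C + 1, by positivity, fun y => ?_⟩
  have hx : Φ y - Φ x₀ ∈ (pgauge G.growthPolytope (Φ y - Φ x₀) + 1) • G.growthPolytope :=
    mem_smul_of_pgauge_lt convex_growthPolytope zero_mem_growthPolytope
      (exists_mem_smul_growthPolytope hsc x₀.2 _) (lt_add_one _)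
  have hnorm : ‖(Φ y - Φ x₀) - latticeCast (y.1 - x₀.1)‖ ≤ ∑ v, ‖c v‖ := by
    rw [hΦ.sub_eq, add_sub_cancel_left]
    exact Finset.single_le_sum (f := fun v => ‖c v‖) (fun v _ => norm_nonneg _) (Finset.mem_univ _)
  have htranslate : G.dist x₀ y ≤ G.dist (0, x₀.2) (y.1 - x₀.1, y.2) := by
    simpa using dist_translate_le hsc x₀.1 (0, x₀.2) (y.1 - x₀.1, y.2)
  have hcore := hC _ y.2 _ _ (by linarith [pgauge_nonneg G.growthPolytope (Φ y - Φ x₀)]) hx hnorm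
  have htranslate' : (G.dist x₀ y : ℝ) ≤ G.dist (0, x₀.2) (y.1 - x₀.1, y.2) := by
    exact_mod_cast htranslate
  linarith

end PeriodicGraph

/-- For a strongly connected periodic graph with periodic realization `Φ` and
vertex `x₀`, the graph distance differs from the gauge distance of the growth polytope by a
bounded amount: there are `C′₁, C′₂ ≥ 0` with
`d_{P_Γ,Φ}(x₀,y) − C′₁ ≤ d_Γ(x₀,y) ≤ d_{P_Γ,Φ}(x₀,y) + C′₂` for all `y`. -/
theorem dist_pgauge_bounded_difference {n : ℕ} (G : PeriodicGraph n)
    (hsc : G.StronglyConnected)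
    (Φ : (Fin n → ℤ) × G.V0 → Fin n → ℝ) (hΦ : G.IsRealization Φ)
    (x₀ : (Fin n → ℤ) × G.V0) :
    ∃ C₁ C₂ : ℝ, 0 ≤ C₁ ∧ 0 ≤ C₂ ∧ ∀ y : (Fin n → ℤ) × G.V0,
      PeriodicGraph.pgauge G.growthPolytope (Φ y - Φ x₀) - C₁ ≤ (G.dist x₀ y : ℝ) ∧
      (G.dist x₀ y : ℝ) ≤ PeriodicGraph.pgauge G.growthPolytope (Φ y - Φ x₀) + C₂ := by
  obtain ⟨C₁, hC₁, hlower⟩ := PeriodicGraph.exists_pgauge_le_dist_add hsc hΦ x₀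
  obtain ⟨C₂, hC₂, hupper⟩ := PeriodicGraph.exists_dist_le_pgauge_add hsc hΦ x₀
  exact ⟨C₁, C₂, hC₁, hC₂, fun y => ⟨sub_le_iff_le_add.2 (hlower y), hupper y⟩⟩
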